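/- arXiv:1402.2565 — 5 statements merged into one kernel-verified Lean document; each statement's English description precedes it below -/
import Mathlib

section
/- Since f and g are coprime, the image of g − f in the ℚ-algebra V = ℚ[X]/(f(X)) is a unit; consequently v is a cyclic vector for A, i.e. the vectors v, Av, A²v, …, A^(n−1)v form a ℚ-basis of V. -/
open Polynomial

/-!
In `V = ℚ[X]/(f)` one computes `ξ v = ξ C ξ^(n-1) - ξ^n = (X^n - g) - X^n = -g`, and `g` is a unit
modulo `f` because a Bézout relation `a f + b g = 1` reduces to `b g = 1`. Hence `v` is a unit, and
multiplication by `v` carries the power basis `1, ξ, …, ξ^(n-1)` to `v, ξ v, …, ξ^(n-1) v`.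
-/

noncomputable section

namespace AdjoinRoot

theorem isUnit_mk_of_isCoprime {R : Type*} [CommRing R] {p q : R[X]} (h : IsCoprime p q) :
    IsUnit (mk p q) := by
  simpa [mk_self, isCoprime_zero_left] using h.map (mk p)

variable {K : Type*} [Field K] {p : K[X]}

def powerBasisMulUnit (hp : p ≠ 0) {n : ℕ} (hn : p.natDegree = n) (u : (AdjoinRoot p)ˣ) :
    Module.Basis (Fin n) K (AdjoinRoot p) :=
  ((powerBasis hp).basis.reindex (finCongr (by rw [powerBasis_dim, hn]))).map
    (u.mulLeftLinearEquiv K _)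

@[simp]
theorem powerBasisMulUnit_apply (hp : p ≠ 0) {n : ℕ} (hn : p.natDegree = n)
    (u : (AdjoinRoot p)ˣ) (k : Fin n) :
    powerBasisMulUnit hp hn u k = root p ^ (k : ℕ) * u := by
  simp [powerBasisMulUnit, mul_comm]

end AdjoinRoot

theorem stmt_2_general
    (n : ℕ) (hn : 0 < n)
    (f g : Polynomial ℤ)
    (hfm : f.Monic)
    (hfd : f.natDegree = n)
    (hcop : IsCoprime f g)
    (fq : Polynomial ℚ) (hfq : fq = f.map (Int.castRingHom ℚ))
    (ξ : AdjoinRoot fq) (hξ : ξ = AdjoinRoot.root fq)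
    (Be Ce : AdjoinRoot fq →ₗ[ℚ] AdjoinRoot fq)
    (hBe2 : Be (ξ ^ (n - 1)) = AdjoinRoot.mk fq (X ^ n - g.map (Int.castRingHom ℚ)))
    (hCe : ∀ w : AdjoinRoot fq, ξ * Ce w = Be w)
    (v : AdjoinRoot fq) (hv : v = Ce (ξ ^ (n - 1)) - ξ ^ (n - 1)) :
    IsUnit (AdjoinRoot.mk fq (g.map (Int.castRingHom ℚ) - f.map (Int.castRingHom ℚ))) ∧
      LinearIndependent ℚ (fun k : Fin n => ξ ^ (k : ℕ) * v) ∧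
      Submodule.span ℚ (Set.range fun k : Fin n => ξ ^ (k : ℕ) * v) = ⊤ := by
  set gq := g.map (Int.castRingHom ℚ)
  have hfq0 : fq ≠ 0 := hfq ▸ (hfm.map _).ne_zero
  have hdeg : fq.natDegree = n := by rw [hfq, hfm.natDegree_map, hfd]
  have hg_unit : IsUnit (AdjoinRoot.mk fq gq) :=
    AdjoinRoot.isUnit_mk_of_isCoprime (hfq ▸ hcop.map (mapRingHom (Int.castRingHom ℚ)))
  have hmk_sub : AdjoinRoot.mk fq (gq - f.map (Int.castRingHom ℚ)) = AdjoinRoot.mk fq gq := by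
    rw [map_sub, ← hfq, AdjoinRoot.mk_self, sub_zero]
  have hξv : ξ * v = -AdjoinRoot.mk fq gq := by
    rw [hv, mul_sub, hCe, hBe2, ← pow_succ', Nat.sub_add_cancel hn, hξ, map_sub, map_pow,
      AdjoinRoot.mk_X, sub_sub_cancel_left]
  obtain ⟨u, rfl⟩ : IsUnit v := isUnit_of_mul_isUnit_right (hξv ▸ hg_unit.neg)
  have hbasis : (fun k : Fin n => ξ ^ (k : ℕ) * u) = AdjoinRoot.powerBasisMulUnit hfq0 hdeg u := by
    ext k
    rw [AdjoinRoot.powerBasisMulUnit_apply, hξ]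
  rw [hmk_sub, hbasis]
  exact ⟨hg_unit, Module.Basis.linearIndependent _, Module.Basis.span_eq _⟩

/-- For coprime monic `f, g ∈ ℤ[X]` of degree `n` with
`f(0) = −1`, `g(0) = 1`, the image of `g − f` in `V = ℚ[X]/(f)` is a unit;
consequently `v` is a cyclic vector for `A`: the vectors
`v, Av, …, A^(n−1)v` form a `ℚ`-basis of `V`. -/
theorem stmt_2
    (n : ℕ) (hn : 0 < n)
    (f g : Polynomial ℤ)
    (hfm : f.Monic) (hgm : g.Monic)
    (hfd : f.natDegree = n) (hgd : g.natDegree = n)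
    (hcop : IsCoprime f g)
    (hf0 : f.coeff 0 = -1) (hg0 : g.coeff 0 = 1)
    (fq : Polynomial ℚ) (hfq : fq = f.map (Int.castRingHom ℚ))
    (ξ : AdjoinRoot fq) (hξ : ξ = AdjoinRoot.root fq)
    (Be Ce : AdjoinRoot fq →ₗ[ℚ] AdjoinRoot fq)
    (hBe1 : ∀ k : ℕ, k < n - 1 → Be (ξ ^ k) = ξ ^ (k + 1))
    (hBe2 : Be (ξ ^ (n - 1)) = AdjoinRoot.mk fq (X ^ n - g.map (Int.castRingHom ℚ)))
    (hCe : ∀ w : AdjoinRoot fq, ξ * Ce w = Be w)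
    (v : AdjoinRoot fq) (hv : v = Ce (ξ ^ (n - 1)) - ξ ^ (n - 1)) :
    IsUnit (AdjoinRoot.mk fq (g.map (Int.castRingHom ℚ) - f.map (Int.castRingHom ℚ))) ∧
      LinearIndependent ℚ (fun k : Fin n => ξ ^ (k : ℕ) * v) ∧
      Submodule.span ℚ (Set.range fun k : Fin n => ξ ^ (k : ℕ) * v) = ⊤ :=
  stmt_2_general n hn f g hfm hfd hcop fq hfq ξ hξ Be Ce hBe2 hCe v hv
end
end

section
/- Let f₀(X) = X⁵ − 1, g₀(X) = (X+1)(X²+1)², let m ≥ 0, let P, Q ∈ ℤ[X] be monic polynomials of degree m, and set f(X) = f₀(X)·P(X⁶), g(X) = g₀(X)·Q(X⁶) and n = 6m + 5. Then for each integer k with 0 ≤ k ≤ 4, the coefficient of X^(n−1) in the remainder of X^k·(f − g) upon division by f equals the coefficient of X⁴ in the remainder of X^k·(f₀ − g₀) upon division by f₀. -/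
open Polynomial

private lemma mod_eq' {f p q r : Polynomial ℤ} (hf : f.Monic)
    (h : r + f * q = p) (hr : r.degree < f.degree) : p %ₘ f = r :=
  (Polynomial.div_modByMonic_unique q r hf ⟨h, hr⟩).2

private lemma aux (m : ℕ) (P Q : Polynomial ℤ) (hP : P.Monic) (hQ : Q.Monic)
    (hPd : P.natDegree = m) (hQd : Q.natDegree = m)
    (k : ℕ) (hk : k ≤ 4) (qk rk : Polynomial ℤ)
    (hqd : qk.natDegree ≤ 4) (hrd : rk.degree ≤ 4)
    (hid : rk + (X ^ 5 - 1) * qk = X ^ k * ((X ^ 5 - 1) - (X + 1) * (X ^ 2 + 1) ^ 2)) :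
    ((X ^ k * ((X ^ 5 - 1) * P.comp (X ^ 6) - (X + 1) * (X ^ 2 + 1) ^ 2 * Q.comp (X ^ 6))) %ₘ
        ((X ^ 5 - 1) * P.comp (X ^ 6))).coeff (6 * m + 5 - 1) =
      ((X ^ k * ((X ^ 5 - 1) - (X + 1) * (X ^ 2 + 1) ^ 2)) %ₘ (X ^ 5 - 1)).coeff 4 := by
  have hf₀m : (X ^ 5 - 1 : Polynomial ℤ).Monic := by monicity!
  have hf₀d : (X ^ 5 - 1 : Polynomial ℤ).degree = 5 := by compute_degree!
  have hrd5 : rk.degree < (X ^ 5 - 1 : Polynomial ℤ).degree := by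
    rw [hf₀d]; exact lt_of_le_of_lt hrd (by decide)
  have hrhs : (X ^ k * ((X ^ 5 - 1) - (X + 1) * (X ^ 2 + 1) ^ 2)) %ₘ (X ^ 5 - 1) = rk :=
    mod_eq' hf₀m hid hrd5
  rw [hrhs]
  have hrn : rk.natDegree ≤ 4 := natDegree_le_iff_degree_le.mpr hrd
  rcases Nat.eq_zero_or_pos m with hm | hm
  · subst hm
    have hP1 : P = 1 := hP.natDegree_eq_zero.mp hPd
    have hQ1 : Q = 1 := hQ.natDegree_eq_zero.mp hQd
    rw [hP1, hQ1, one_comp, mul_one, mul_one, show 6 * 0 + 5 - 1 = 4 from rfl, hrhs]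
  -- main case `m ≥ 1`
  have hPm : (P.comp (X ^ 6) : Polynomial ℤ).Monic :=
    hP.comp (monic_X_pow 6) (by simp)
  have hQm : (Q.comp (X ^ 6) : Polynomial ℤ).Monic :=
    hQ.comp (monic_X_pow 6) (by simp)
  have hfm : ((X ^ 5 - 1) * P.comp (X ^ 6) : Polynomial ℤ).Monic := hf₀m.mul hPm
  have hPcd : (P.comp (X ^ 6) : Polynomial ℤ).natDegree = 6 * m := by
    rw [natDegree_comp, hPd, natDegree_X_pow]; ring
  have hQcd : (Q.comp (X ^ 6) : Polynomial ℤ).natDegree = 6 * m := by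
    rw [natDegree_comp, hQd, natDegree_X_pow]; ring
  have hf₀n : (X ^ 5 - 1 : Polynomial ℤ).natDegree = 5 := by compute_degree!
  have hfd : ((X ^ 5 - 1) * P.comp (X ^ 6) : Polynomial ℤ).natDegree = 6 * m + 5 := by
    rw [Monic.natDegree_mul hf₀m hPm, hPcd, hf₀n]; ring
  -- degree bounds on `P - Q` and `Q - X ^ m`
  have hPdeg : P.degree = (m : ℕ) := by
    rw [degree_eq_natDegree hP.ne_zero, hPd]
  have hQdeg : Q.degree = (m : ℕ) := by
    rw [degree_eq_natDegree hQ.ne_zero, hQd]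
  have hPQ : (P - Q).natDegree ≤ m - 1 := by
    rcases eq_or_ne (P - Q) 0 with h | h
    · simp [h]
    · have h1 : (P - Q).degree < (m : WithBot ℕ) := by
        have := degree_sub_lt (p := P) (q := Q) (hPdeg.trans hQdeg.symm) hP.ne_zero
          (hP.leadingCoeff.trans hQ.leadingCoeff.symm)
        rwa [hPdeg] at this
      have := (natDegree_lt_iff_degree_lt h).mpr h1
      omega
  have hQX : (Q - X ^ m).natDegree ≤ m - 1 := by
    rcases eq_or_ne (Q - X ^ m) 0 with h | h
    · simp [h]
    · have h1 : (Q - X ^ m).degree < (m : WithBot ℕ) := by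
        have := degree_sub_lt (p := Q) (q := X ^ m)
          (hQdeg.trans (degree_X_pow m).symm) hQ.ne_zero
          (hQ.leadingCoeff.trans (leadingCoeff_X_pow m).symm)
        rwa [hQdeg] at this
      have := (natDegree_lt_iff_degree_lt h).mpr h1
      omega
  have hA : ((P - Q).comp (X ^ 6) : Polynomial ℤ).natDegree ≤ 6 * m - 6 := by
    rw [natDegree_comp, natDegree_X_pow]; omega
  have hB : ((Q - X ^ m).comp (X ^ 6) : Polynomial ℤ).natDegree ≤ 6 * m - 6 := by
    rw [natDegree_comp, natDegree_X_pow]; omega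
  have hXq : (X ^ k - qk : Polynomial ℤ).natDegree ≤ 4 := by
    refine le_trans (natDegree_sub_le _ _) (max_le ?_ hqd)
    simpa [natDegree_X_pow] using hk
  -- natDegree bounds for the two pieces of the remainder
  have ht1 : ((X ^ 5 - 1) * ((X ^ k - qk) * (P - Q).comp (X ^ 6)) : Polynomial ℤ).natDegree
      ≤ 6 * m + 3 := by
    refine le_trans natDegree_mul_le ?_
    have h2 : ((X ^ k - qk) * (P - Q).comp (X ^ 6) : Polynomial ℤ).natDegree
        ≤ (X ^ k - qk : Polynomial ℤ).natDegree + ((P - Q).comp (X ^ 6)).natDegree :=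
      natDegree_mul_le
    omega
  have ht2 : (rk * Q.comp (X ^ 6)).natDegree ≤ 6 * m + 4 := by
    refine le_trans natDegree_mul_le ?_
    rw [hQcd]; omega
  -- the remainder of the big division
  have hmod : (X ^ k * ((X ^ 5 - 1) * P.comp (X ^ 6) -
      (X + 1) * (X ^ 2 + 1) ^ 2 * Q.comp (X ^ 6))) %ₘ ((X ^ 5 - 1) * P.comp (X ^ 6)) =
      (X ^ 5 - 1) * ((X ^ k - qk) * (P - Q).comp (X ^ 6)) + rk * Q.comp (X ^ 6) := by
    apply mod_eq' (q := qk) hfm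
    · rw [sub_comp]
      linear_combination (Q.comp (X ^ 6 : Polynomial ℤ)) * hid
    · have hsum : ((X ^ 5 - 1) * ((X ^ k - qk) * (P - Q).comp (X ^ 6)) +
          rk * Q.comp (X ^ 6) : Polynomial ℤ).natDegree ≤ 6 * m + 4 :=
        le_trans (natDegree_add_le _ _) (max_le (le_trans ht1 (by omega)) ht2)
      calc ((X ^ 5 - 1) * ((X ^ k - qk) * (P - Q).comp (X ^ 6)) +
            rk * Q.comp (X ^ 6) : Polynomial ℤ).degree
          ≤ (((X ^ 5 - 1) * ((X ^ k - qk) * (P - Q).comp (X ^ 6)) +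
            rk * Q.comp (X ^ 6) : Polynomial ℤ).natDegree : WithBot ℕ) := degree_le_natDegree
        _ < (((X ^ 5 - 1) * P.comp (X ^ 6) : Polynomial ℤ).natDegree : WithBot ℕ) := by
            rw [hfd]; exact_mod_cast lt_of_le_of_lt hsum (by omega)
        _ = ((X ^ 5 - 1) * P.comp (X ^ 6) : Polynomial ℤ).degree :=
            (degree_eq_natDegree hfm.ne_zero).symm
  rw [hmod, show 6 * m + 5 - 1 = 6 * m + 4 from by omega, coeff_add,
    coeff_eq_zero_of_natDegree_lt (lt_of_le_of_lt ht1 (by omega)), zero_add]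
  have hQsplit : (Q.comp (X ^ 6) : Polynomial ℤ) = (Q - X ^ m).comp (X ^ 6) + X ^ (6 * m) := by
    rw [sub_comp, X_pow_comp, ← pow_mul, mul_comm 6 m]; ring
  have hB2 : (rk * (Q - X ^ m).comp (X ^ 6)).natDegree < 6 * m + 4 := by
    refine lt_of_le_of_lt natDegree_mul_le ?_; omega
  rw [hQsplit, mul_add, coeff_add, coeff_eq_zero_of_natDegree_lt hB2, zero_add,
    show 6 * m + 4 = 4 + 6 * m from by omega, coeff_mul_X_pow]

/-- Let `f₀ = X⁵ − 1`, `g₀ = (X+1)(X²+1)²`, `P, Q ∈ ℤ[X]` monic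
of degree `m`, `f = f₀·P(X⁶)`, `g = g₀·Q(X⁶)`, `n = 6m + 5`.  For `0 ≤ k ≤ 4` the
coefficient of `X^(n−1)` in the remainder of `X^k(f − g)` upon division by `f`
equals the coefficient of `X⁴` in the remainder of `X^k(f₀ − g₀)` upon division
by `f₀`. -/
theorem stmt_3
    (m : ℕ) (P Q : Polynomial ℤ)
    (hP : P.Monic) (hQ : Q.Monic)
    (hPd : P.natDegree = m) (hQd : Q.natDegree = m)
    (f₀ g₀ f g : Polynomial ℤ)
    (hf₀ : f₀ = X ^ 5 - 1)
    (hg₀ : g₀ = (X + 1) * (X ^ 2 + 1) ^ 2)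
    (hf : f = f₀ * P.comp (X ^ 6))
    (hg : g = g₀ * Q.comp (X ^ 6))
    (n : ℕ) (hn : n = 6 * m + 5) :
    ∀ k : ℕ, k ≤ 4 →
      ((X ^ k * (f - g)) %ₘ f).coeff (n - 1) =
        ((X ^ k * (f₀ - g₀)) %ₘ f₀).coeff 4 := by
  subst hf₀ hg₀ hf hg hn
  intro k hk
  interval_cases k
  · exact aux m P Q hP hQ hPd hQd 0 (by norm_num)
      0 (-X ^ 4 - 2 * X ^ 3 - 2 * X ^ 2 - X - 2)
      (by simp) (by compute_degree!) (by ring)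
  · exact aux m P Q hP hQ hPd hQd 1 (by norm_num)
      (-1) (-2 * X ^ 4 - 2 * X ^ 3 - X ^ 2 - 2 * X - 1)
      (by simp) (by compute_degree!) (by ring)
  · exact aux m P Q hP hQ hPd hQd 2 (by norm_num)
      (-X - 2) (-2 * X ^ 4 - X ^ 3 - 2 * X ^ 2 - X - 2)
      (by compute_degree!) (by compute_degree!) (by ring)
  · exact aux m P Q hP hQ hPd hQd 3 (by norm_num)
      (-X ^ 2 - 2 * X - 2) (-X ^ 4 - 2 * X ^ 3 - X ^ 2 - 2 * X - 2)
      (by compute_degree!) (by compute_degree!) (by ring)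
  · exact aux m P Q hP hQ hPd hQd 4 (by norm_num)
      (-X ^ 3 - 2 * X ^ 2 - 2 * X - 1) (-2 * X ^ 4 - X ^ 3 - 2 * X ^ 2 - 2 * X - 1)
      (by compute_degree!) (by compute_degree!) (by ring)
end

section
/- Let f₀(X) = X⁵ − 1, g₀(X) = (X+1)(X²+1)², let m ≥ 0, let P, Q ∈ ℤ[X] be monic polynomials of degree m with f(X) = f₀(X)·P(X⁶) and g(X) = g₀(X)·Q(X⁶) coprime, and n = 6m + 5. Then h(Aᵏv, Aˡv) = h₀(A₀ᵏv₀, A₀ˡv₀) for all 0 ≤ k, l ≤ 4. Consequently the injective linear map i : V₀ → V determined by i(A₀ᵏv₀) = Aᵏv for 0 ≤ k ≤ 4 is an isometry from (V₀, h₀) onto (W, h|_W), where W is the span of v, Av, A²v, A³v, A⁴v; in particular if h₀ is nondegenerate then the restriction of h to W is nondegenerate. -/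
open Polynomial

noncomputable section

lemma stmt4_comp_coeff_ndvd (Q : Polynomial ℤ) (j : ℕ) (hj : ¬ 6 ∣ j) :
    (Q.comp (X^6)).coeff j = 0 := by
  rw [← expand_eq_comp_X_pow, coeff_expand (by norm_num : 0 < 6), if_neg hj]

lemma stmt4_comp_coeff_dvd (Q : Polynomial ℤ) (j : ℕ) :
    (Q.comp (X^6)).coeff (6*j) = Q.coeff j := by
  rw [← expand_eq_comp_X_pow, coeff_expand_mul' (by norm_num : 0 < 6)]

lemma stmt4_f_coeff (m : ℕ) (P : Polynomial ℤ) (r : ℕ) (h1 : 1 ≤ r) (h4 : r ≤ 4) :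
    ((X^5 - 1 : Polynomial ℤ) * P.comp (X^6)).coeff (6*m + r) = 0 := by
  have hg : (X^5 - 1 : Polynomial ℤ) * P.comp (X^6)
      = P.comp (X^6) * X^5 - P.comp (X^6) := by ring
  rw [hg, coeff_sub, coeff_mul_X_pow', stmt4_comp_coeff_ndvd P (6*m+r) (by omega), sub_zero]
  split_ifs with h5
  · exact stmt4_comp_coeff_ndvd P (6*m+r-5) (by omega)
  · rfl

lemma stmt4_g_coeff (m : ℕ) (Q : Polynomial ℤ) (hQ : Q.Monic) (hQd : Q.natDegree = m)
    (r : ℕ) (h1 : 1 ≤ r) (h4 : r ≤ 4) :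
    (((X : Polynomial ℤ) + 1) * (X^2 + 1)^2 * Q.comp (X^6)).coeff (6*m + r)
      = (if r = 1 ∨ r = 4 then 1 else 2) := by
  have hQm : Q.coeff m = 1 := by rw [← hQd]; exact hQ.coeff_natDegree
  have hg : ((X : Polynomial ℤ) + 1) * (X^2 + 1)^2 * Q.comp (X^6)
      = Q.comp (X^6) * X^5 + Q.comp (X^6) * X^4
        + (Q.comp (X^6) * X^3 + Q.comp (X^6) * X^3)
        + (Q.comp (X^6) * X^2 + Q.comp (X^6) * X^2)
        + Q.comp (X^6) * X^1 + Q.comp (X^6) := by ring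
  rw [hg]
  simp only [coeff_add, coeff_mul_X_pow']
  have hz : ∀ s : ℕ, s ≤ 5 → s ≠ r →
      (if s ≤ 6*m + r then (Q.comp (X^6)).coeff (6*m + r - s) else 0) = 0 := by
    intro s hs hsr
    split_ifs with hle
    · exact stmt4_comp_coeff_ndvd Q _ (by omega)
    · rfl
  have hs : ∀ s : ℕ, s = r →
      (if s ≤ 6*m + r then (Q.comp (X^6)).coeff (6*m + r - s) else 0) = 1 := by
    rintro s rfl
    rw [if_pos (by omega), show 6*m + s - s = 6*m by omega, stmt4_comp_coeff_dvd, hQm]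
  rw [stmt4_comp_coeff_ndvd Q (6*m+r) (by omega)]
  interval_cases r
  · rw [hz 5 (by norm_num) (by norm_num), hz 4 (by norm_num) (by norm_num),
      hz 3 (by norm_num) (by norm_num), hz 2 (by norm_num) (by norm_num),
      hs 1 rfl]
    norm_num
  · rw [hz 5 (by norm_num) (by norm_num), hz 4 (by norm_num) (by norm_num),
      hz 3 (by norm_num) (by norm_num), hs 2 rfl, hz 1 (by norm_num) (by norm_num)]
    norm_num
  · rw [hz 5 (by norm_num) (by norm_num), hz 4 (by norm_num) (by norm_num),
      hs 3 rfl, hz 2 (by norm_num) (by norm_num), hz 1 (by norm_num) (by norm_num)]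
    norm_num
  · rw [hz 5 (by norm_num) (by norm_num), hs 4 rfl,
      hz 3 (by norm_num) (by norm_num), hz 2 (by norm_num) (by norm_num),
      hz 1 (by norm_num) (by norm_num)]
    norm_num

lemma stmt4_sum_eval
    (n : ℕ) (hn5 : 5 ≤ n)
    (F : Polynomial ℚ)
    (ξ : AdjoinRoot F) (hξ : ξ = AdjoinRoot.root F)
    (v : AdjoinRoot F)
    (h : AdjoinRoot F →ₗ[ℚ] AdjoinRoot F →ₗ[ℚ] ℚ)
    (N : ℕ) (he : ∀ k, k < N → h v (ξ ^ k) = (if k = n - 1 then (1:ℚ) else 0))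
    (hNn : n ≤ N)
    (p : Polynomial ℚ) (hp : p.natDegree < N) :
    h v (AdjoinRoot.mk F p) = p.coeff (n - 1) := by
  have hrepr : AdjoinRoot.mk F p = ∑ k ∈ Finset.range N, p.coeff k • ξ ^ k := by
    conv_lhs => rw [p.as_sum_range' N hp]
    rw [map_sum]
    refine Finset.sum_congr rfl fun k _ => ?_
    rw [← C_mul_X_pow_eq_monomial, map_mul, map_pow, AdjoinRoot.mk_X, ← hξ,
      AdjoinRoot.mk_C, ← AdjoinRoot.algebraMap_eq, ← Algebra.smul_def]
  rw [hrepr, map_sum]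
  have hterm : ∀ k ∈ Finset.range N, h v (p.coeff k • ξ ^ k)
      = (if k = n - 1 then p.coeff k else 0) := by
    intro k hk
    rw [map_smul, smul_eq_mul, he k (Finset.mem_range.mp hk)]
    split_ifs <;> ring
  rw [Finset.sum_congr rfl hterm, Finset.sum_ite_eq' (Finset.range N) (n-1) (fun k => p.coeff k),
    if_pos (Finset.mem_range.mpr (by omega))]

lemma stmt4_key
    (n : ℕ) (hn5 : 5 ≤ n)
    (F G : Polynomial ℚ)
    (hFm : F.Monic) (hFdeg : F.natDegree = n)
    (hF1 : F.coeff (n - 1) = 0) (hF2 : F.coeff (n - 2) = 0) (hF3 : F.coeff (n - 3) = 0)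
    (hDdeg : (G - F).natDegree ≤ n - 1)
    (hd1 : (G - F).coeff (n - 1) = 1) (hd2 : (G - F).coeff (n - 2) = 2)
    (hd3 : (G - F).coeff (n - 3) = 2) (hd4 : (G - F).coeff (n - 4) = 1)
    (ξ : AdjoinRoot F) (hξ : ξ = AdjoinRoot.root F)
    (Be Ce : AdjoinRoot F →ₗ[ℚ] AdjoinRoot F)
    (hBe2 : Be (ξ ^ (n - 1)) = AdjoinRoot.mk F (X ^ n - G))
    (hCe : ∀ w, ξ * Ce w = Be w)
    (v : AdjoinRoot F) (hv : v = Ce (ξ ^ (n - 1)) - ξ ^ (n - 1))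
    (h : AdjoinRoot F →ₗ[ℚ] AdjoinRoot F →ₗ[ℚ] ℚ)
    (hsymm : ∀ w w', h w w' = h w' w)
    (hAinv : ∀ w w', h (ξ * w) (ξ * w') = h w w')
    (hBinvtop : ∀ k : ℕ, k ≤ n - 2 → h (Be (ξ ^ (n-1))) (ξ ^ (k+1)) = h (ξ ^ (n-1)) (ξ ^ k))
    (hBinvtt : h (Be (ξ ^ (n-1))) (Be (ξ ^ (n-1))) = h (ξ ^ (n-1)) (ξ ^ (n-1)))
    (hnorm : h (ξ ^ (n - 1)) v = 1) :
    h v v = -2 ∧ h (ξ * v) v = -1 ∧ h (ξ^2 * v) v = -2 ∧ h (ξ^3 * v) v = -2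
      ∧ h (ξ^4 * v) v = -1 := by
  have hxv : ξ * v = Be (ξ ^ (n-1)) - ξ * ξ ^ (n-1) := by
    rw [hv, mul_sub, hCe]
  have hxn : ξ * ξ ^ (n-1) = AdjoinRoot.mk F (X ^ n) := by
    rw [← pow_succ', map_pow, AdjoinRoot.mk_X, ← hξ, show n - 1 + 1 = n by omega]
  have hmkG : ξ * v = - AdjoinRoot.mk F G := by
    rw [hxv, hBe2, hxn, ← map_sub, show (X^n - G) - X^n = -G by ring, map_neg]
  have hBtop : Be (ξ ^ (n-1)) = ξ * (ξ ^ (n-1) + v) := by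
    rw [mul_add, hxv]; ring
  -- low values of h v (ξ^k)
  have hκlow : ∀ k, k ≤ n - 2 → h v (ξ ^ k) = 0 := by
    intro k hk
    have h1 := hBinvtop k hk
    rw [hBtop, show ξ ^ (k+1) = ξ * ξ ^ k by ring, hAinv] at h1
    have h2 : h (ξ ^ (n-1)) (ξ ^ k) + h v (ξ ^ k) = h (ξ ^ (n-1)) (ξ ^ k) := by
      simpa [map_add, LinearMap.add_apply] using h1
    linarith
  have hκtop : h v (ξ ^ (n-1)) = 1 := by rw [hsymm]; exact hnorm
  have hvv : h v v = -2 := by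
    have h1 := hBinvtt
    rw [hBtop, hAinv] at h1
    simp only [map_add, LinearMap.add_apply] at h1
    rw [hnorm, hκtop] at h1
    linarith
  have hκe : ∀ k, k < n → h v (ξ ^ k) = (if k = n - 1 then (1:ℚ) else 0) := by
    intro k hk
    rcases eq_or_ne k (n-1) with rfl | hne
    · rw [if_pos rfl]; exact hκtop
    · rw [if_neg hne]; exact hκlow k (by omega)
  have hmkF : AdjoinRoot.mk F F = 0 := AdjoinRoot.mk_self
  have hq : (X ^ n - F).natDegree ≤ n - 1 := by
    rw [natDegree_le_iff_coeff_eq_zero]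
    intro N hN
    rw [coeff_sub, coeff_X_pow]
    rcases eq_or_lt_of_le (show n ≤ N by omega) with rfl | hlt
    · rw [if_pos rfl, ← hFdeg, hFm.coeff_natDegree]; ring
    · rw [if_neg (by omega), coeff_eq_zero_of_natDegree_lt (by omega), sub_zero]
  have hmkq : ∀ t : ℕ, ξ ^ (n + t) = AdjoinRoot.mk F (X ^ t * (X ^ n - F)) := by
    intro t
    rw [map_mul, map_sub, hmkF, sub_zero, map_pow, map_pow, AdjoinRoot.mk_X, ← hξ,
      ← pow_add]
    ring
  have hqc : ∀ t : ℕ, t ≤ 2 → (X ^ t * (X ^ n - F)).coeff (n - 1) = 0 := by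
    intro t ht
    rw [mul_comm, coeff_mul_X_pow', if_pos (by omega), coeff_sub, coeff_X_pow,
      if_neg (by omega)]
    have : n - 1 - t = n - 1 ∨ n - 1 - t = n - 2 ∨ n - 1 - t = n - 3 := by omega
    rcases this with h' | h' | h' <;> rw [h'] <;> simp [hF1, hF2, hF3]
  have hqdeg : ∀ t : ℕ, (X ^ t * (X ^ n - F)).natDegree ≤ t + (n - 1) :=
    fun t => le_trans (natDegree_mul_le) (by simp [natDegree_X_pow]; omega)
  have hκext : ∀ k, k < n + 3 → h v (ξ ^ k) = (if k = n - 1 then (1:ℚ) else 0) := by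
    intro k hk
    induction k using Nat.strong_induction_on with
    | _ k ih =>
      rcases lt_or_ge k n with hkn | hkn
      · exact hκe k hkn
      · have hkt : k = n + (k - n) := by omega
        have ht2 : k - n ≤ 2 := by omega
        rw [if_neg (by omega), hkt, hmkq (k - n)]
        rw [stmt4_sum_eval n hn5 F ξ hξ v h k
          (fun j hj => ih j hj (by omega)) (by omega) _
          (by have := hqdeg (k - n); omega)]
        exact hqc (k - n) ht2
  -- the four shifted values
  have hmkD : ∀ t : ℕ, AdjoinRoot.mk F (X ^ t * (G - F)) = -(ξ ^ t * (ξ * v)) := by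
    intro t
    rw [map_mul, map_sub, hmkF, sub_zero, map_pow, AdjoinRoot.mk_X, ← hξ, hmkG]
    ring
  have hval : ∀ t : ℕ, t ≤ 3 → h (ξ ^ (t+1) * v) v = -((G - F).coeff (n - 1 - t)) := by
    intro t ht
    rw [hsymm, show ξ ^ (t+1) * v = ξ ^ t * (ξ * v) by ring, ← neg_neg (ξ ^ t * (ξ * v)),
      ← hmkD t, map_neg, stmt4_sum_eval n hn5 F ξ hξ v h (n+3) hκext (by omega) _
        (by have h1 := natDegree_mul_le (p := (X:ℚ[X]) ^ t) (q := G - F);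
            have h2 : ((X:ℚ[X]) ^ t).natDegree = t := natDegree_X_pow t
            omega)]
    rw [mul_comm, coeff_mul_X_pow', if_pos (by omega)]
  refine ⟨hvv, ?_, ?_, ?_, ?_⟩
  · have := hval 0 (by norm_num)
    rw [show n - 1 - 0 = n - 1 by omega, hd1] at this
    simpa using this
  · have := hval 1 (by norm_num)
    rw [show n - 1 - 1 = n - 2 by omega, hd2] at this
    norm_num at this ⊢; exact this
  · have := hval 2 (by norm_num)
    rw [show n - 1 - 2 = n - 3 by omega, hd3] at this
    norm_num at this ⊢; exact this
  · have := hval 3 (by norm_num)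
    rw [show n - 1 - 3 = n - 4 by omega, hd4] at this
    norm_num at this ⊢; exact this

lemma stmt4_linalg
    {M M₀ : Type*} [AddCommGroup M] [Module ℚ M] [AddCommGroup M₀] [Module ℚ M₀]
    (hfin : Module.finrank ℚ M₀ = 5)
    (h : M →ₗ[ℚ] M →ₗ[ℚ] ℚ) (h₀ : M₀ →ₗ[ℚ] M₀ →ₗ[ℚ] ℚ)
    (u : Fin 5 → M) (u₀ : Fin 5 → M₀)
    (gram : ∀ k l : Fin 5, h (u k) (u l) = h₀ (u₀ k) (u₀ l))
    (g00 : h₀ (u₀ 0) (u₀ 0) = -2) (g01 : h₀ (u₀ 0) (u₀ 1) = -1)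
    (g02 : h₀ (u₀ 0) (u₀ 2) = -2) (g03 : h₀ (u₀ 0) (u₀ 3) = -2)
    (g04 : h₀ (u₀ 0) (u₀ 4) = -1)
    (g10 : h₀ (u₀ 1) (u₀ 0) = -1) (g11 : h₀ (u₀ 1) (u₀ 1) = -2)
    (g12 : h₀ (u₀ 1) (u₀ 2) = -1) (g13 : h₀ (u₀ 1) (u₀ 3) = -2)
    (g14 : h₀ (u₀ 1) (u₀ 4) = -2)
    (g20 : h₀ (u₀ 2) (u₀ 0) = -2) (g21 : h₀ (u₀ 2) (u₀ 1) = -1)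
    (g22 : h₀ (u₀ 2) (u₀ 2) = -2) (g23 : h₀ (u₀ 2) (u₀ 3) = -1)
    (g24 : h₀ (u₀ 2) (u₀ 4) = -2)
    (g30 : h₀ (u₀ 3) (u₀ 0) = -2) (g31 : h₀ (u₀ 3) (u₀ 1) = -2)
    (g32 : h₀ (u₀ 3) (u₀ 2) = -1) (g33 : h₀ (u₀ 3) (u₀ 3) = -2)
    (g34 : h₀ (u₀ 3) (u₀ 4) = -1)
    (g40 : h₀ (u₀ 4) (u₀ 0) = -1) (g41 : h₀ (u₀ 4) (u₀ 1) = -2)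
    (g42 : h₀ (u₀ 4) (u₀ 2) = -2) (g43 : h₀ (u₀ 4) (u₀ 3) = -1)
    (g44 : h₀ (u₀ 4) (u₀ 4) = -2)
    (i : M₀ →ₗ[ℚ] M) (hi : ∀ k, i (u₀ k) = u k)
    (W : Submodule ℚ M) (hW : W = Submodule.span ℚ (Set.range u)) :
    Function.Injective i ∧ (∀ w w', h (i w) (i w') = h₀ w w') ∧
      LinearMap.range i = W ∧
      ((∀ w, (∀ w', h₀ w w' = 0) → w = 0) →
        ∀ w ∈ W, (∀ w' ∈ W, h w w' = 0) → w = 0) := by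
  have solve : ∀ a : Fin 5 → ℚ,
      (∀ l : Fin 5, ∑ k, a k * h₀ (u₀ k) (u₀ l) = 0) → ∀ k, a k = 0 := by
    intro a ha
    have E0 := ha 0; have E1 := ha 1; have E2 := ha 2; have E3 := ha 3; have E4 := ha 4
    rw [Fin.sum_univ_five] at E0 E1 E2 E3 E4
    rw [g00, g10, g20, g30, g40] at E0
    rw [g01, g11, g21, g31, g41] at E1
    rw [g02, g12, g22, g32, g42] at E2
    rw [g03, g13, g23, g33, g43] at E3
    rw [g04, g14, g24, g34, g44] at E4
    have z0 : a 0 = 0 := by linarith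
    have z1 : a 1 = 0 := by linarith
    have z2 : a 2 = 0 := by linarith
    have z3 : a 3 = 0 := by linarith
    have z4 : a 4 = 0 := by linarith
    intro k; fin_cases k
    exacts [z0, z1, z2, z3, z4]
  have hexp : ∀ (a : Fin 5 → ℚ) (x : M₀),
      h₀ (∑ k, a k • u₀ k) x = ∑ k, a k * h₀ (u₀ k) x := by
    intro a x
    rw [map_sum, LinearMap.sum_apply]
    exact Finset.sum_congr rfl fun k _ => by rw [map_smul, LinearMap.smul_apply, smul_eq_mul]
  have hindep : LinearIndependent ℚ u₀ := by
    rw [Fintype.linearIndependent_iff]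
    intro a ha
    apply solve a
    intro l
    rw [← hexp a (u₀ l), ha, map_zero, LinearMap.zero_apply]
  have hspan : Submodule.span ℚ (Set.range u₀) = ⊤ :=
    hindep.span_eq_top_of_card_eq_finrank (by simp [hfin])
  have hrep : ∀ w : M₀, ∃ a : Fin 5 → ℚ, ∑ k, a k • u₀ k = w := by
    intro w
    have hw : w ∈ Submodule.span ℚ (Set.range u₀) := by rw [hspan]; trivial
    exact (Submodule.mem_span_range_iff_exists_fun ℚ).1 hw
  have hiso : ∀ w w', h (i w) (i w') = h₀ w w' := by
    intro w w'
    obtain ⟨a, rfl⟩ := hrep w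
    obtain ⟨c, rfl⟩ := hrep w'
    have hiw : i (∑ k, a k • u₀ k) = ∑ k, a k • u k := by
      rw [map_sum]; exact Finset.sum_congr rfl fun k _ => by rw [map_smul, hi]
    have hiw' : i (∑ k, c k • u₀ k) = ∑ k, c k • u k := by
      rw [map_sum]; exact Finset.sum_congr rfl fun k _ => by rw [map_smul, hi]
    have expand2 : h (∑ k, a k • u k) (∑ l, c l • u l)
        = ∑ k, ∑ l, a k * (c l * h (u k) (u l)) := by
      simp only [map_sum, map_smul, LinearMap.sum_apply, LinearMap.smul_apply,
        smul_eq_mul, Finset.mul_sum]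
      rw [Finset.sum_comm]
      exact Finset.sum_congr rfl fun k _ => Finset.sum_congr rfl fun l _ => by ring
    have expand2' : h₀ (∑ k, a k • u₀ k) (∑ l, c l • u₀ l)
        = ∑ k, ∑ l, a k * (c l * h₀ (u₀ k) (u₀ l)) := by
      simp only [map_sum, map_smul, LinearMap.sum_apply, LinearMap.smul_apply,
        smul_eq_mul, Finset.mul_sum]
      rw [Finset.sum_comm]
      exact Finset.sum_congr rfl fun k _ => Finset.sum_congr rfl fun l _ => by ring
    rw [hiw, hiw', expand2, expand2']
    refine Finset.sum_congr rfl fun k _ => Finset.sum_congr rfl fun l _ => ?_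
    rw [gram k l]
  have hker : ∀ z : M₀, i z = 0 → z = 0 := by
    intro z hz0
    obtain ⟨a, rfl⟩ := hrep z
    have h0 : ∀ l, ∑ k, a k * h₀ (u₀ k) (u₀ l) = 0 := by
      intro l
      rw [← hexp a (u₀ l), ← hiso _ (u₀ l), hz0, map_zero, LinearMap.zero_apply]
    have ha := solve a h0
    simp [ha]
  have hinj : Function.Injective i := by
    intro x y hxy
    have := hker (x - y) (by rw [map_sub, hxy, sub_self])
    exact sub_eq_zero.1 this
  have hrange : LinearMap.range i = W := by
    rw [hW]
    apply le_antisymm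
    · rintro x ⟨w, rfl⟩
      obtain ⟨a, rfl⟩ := hrep w
      rw [map_sum]
      refine Submodule.sum_mem _ fun k _ => ?_
      rw [map_smul, hi]
      exact Submodule.smul_mem _ _ (Submodule.subset_span ⟨k, rfl⟩)
    · rw [Submodule.span_le]
      rintro x ⟨k, rfl⟩
      exact ⟨u₀ k, hi k⟩
  refine ⟨hinj, hiso, hrange, ?_⟩
  intro _ w hwW hw0
  obtain ⟨z, rfl⟩ : ∃ z, i z = w := by
    have : w ∈ LinearMap.range i := by rw [hrange]; exact hwW
    exact this
  have hz : ∀ z', h₀ z z' = 0 := by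
    intro z'
    rw [← hiso z z']
    apply hw0
    have : i z' ∈ LinearMap.range i := ⟨z', rfl⟩
    rwa [hrange] at this
  obtain ⟨a, rfl⟩ := hrep z
  have h0 : ∀ l, ∑ k, a k * h₀ (u₀ k) (u₀ l) = 0 := by
    intro l; rw [← hexp]; exact hz (u₀ l)
  have ha := solve a h0
  have hzero : (∑ k, a k • u₀ k) = 0 := by simp [ha]
  rw [hzero, map_zero]

set_option maxHeartbeats 2000000 in
/-- With `f₀ = X⁵−1`, `g₀ = (X+1)(X²+1)²`, `f = f₀·P(X⁶)`,
`g = g₀·Q(X⁶)` coprime (`P, Q` monic of degree `m`), `n = 6m+5`: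
`h(Aᵏv, Aˡv) = h₀(A₀ᵏv₀, A₀ˡv₀)` for `0 ≤ k, l ≤ 4`; consequently the linear map
`i : V₀ → V` with `i(A₀ᵏv₀) = Aᵏv` is an injective isometry onto
`W = span(v, Av, A²v, A³v, A⁴v)`, and if `h₀` is nondegenerate then `h`
restricted to `W` is nondegenerate. -/
theorem stmt_4
    (m : ℕ) (P Q : Polynomial ℤ)
    (hP : P.Monic) (hQ : Q.Monic)
    (hPd : P.natDegree = m) (hQd : Q.natDegree = m)
    (f₀ g₀ f g : Polynomial ℤ)
    (hf₀ : f₀ = X ^ 5 - 1)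
    (hg₀ : g₀ = (X + 1) * (X ^ 2 + 1) ^ 2)
    (hf : f = f₀ * P.comp (X ^ 6))
    (hg : g = g₀ * Q.comp (X ^ 6))
    (hcop : IsCoprime f g)
    (n : ℕ) (hn : n = 6 * m + 5)
    -- the construction for the pair (f, g)
    (fq : Polynomial ℚ) (hfq : fq = f.map (Int.castRingHom ℚ))
    (ξ : AdjoinRoot fq) (hξ : ξ = AdjoinRoot.root fq)
    (Be Ce : AdjoinRoot fq →ₗ[ℚ] AdjoinRoot fq)
    (hBe1 : ∀ k : ℕ, k < n - 1 → Be (ξ ^ k) = ξ ^ (k + 1))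
    (hBe2 : Be (ξ ^ (n - 1)) = AdjoinRoot.mk fq (X ^ n - g.map (Int.castRingHom ℚ)))
    (hCe : ∀ w : AdjoinRoot fq, ξ * Ce w = Be w)
    (v : AdjoinRoot fq) (hv : v = Ce (ξ ^ (n - 1)) - ξ ^ (n - 1))
    (h : AdjoinRoot fq →ₗ[ℚ] AdjoinRoot fq →ₗ[ℚ] ℚ)
    (hsymm : ∀ w w', h w w' = h w' w)
    (hAinv : ∀ w w', h (ξ * w) (ξ * w') = h w w')
    (hBinv : ∀ w w', h (Be w) (Be w') = h w w')
    (hnorm : h (ξ ^ (n - 1)) v = 1)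
    -- the construction for the pair (f₀, g₀)
    (fq₀ : Polynomial ℚ) (hfq₀ : fq₀ = f₀.map (Int.castRingHom ℚ))
    (ξ₀ : AdjoinRoot fq₀) (hξ₀ : ξ₀ = AdjoinRoot.root fq₀)
    (Be₀ Ce₀ : AdjoinRoot fq₀ →ₗ[ℚ] AdjoinRoot fq₀)
    (hBe₀1 : ∀ k : ℕ, k ≤ 3 → Be₀ (ξ₀ ^ k) = ξ₀ ^ (k + 1))
    (hBe₀2 : Be₀ (ξ₀ ^ 4) = AdjoinRoot.mk fq₀ (X ^ 5 - g₀.map (Int.castRingHom ℚ)))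
    (hCe₀ : ∀ w : AdjoinRoot fq₀, ξ₀ * Ce₀ w = Be₀ w)
    (v₀ : AdjoinRoot fq₀) (hv₀ : v₀ = Ce₀ (ξ₀ ^ 4) - ξ₀ ^ 4)
    (h₀ : AdjoinRoot fq₀ →ₗ[ℚ] AdjoinRoot fq₀ →ₗ[ℚ] ℚ)
    (hsymm₀ : ∀ w w', h₀ w w' = h₀ w' w)
    (hAinv₀ : ∀ w w', h₀ (ξ₀ * w) (ξ₀ * w') = h₀ w w')
    (hBinv₀ : ∀ w w', h₀ (Be₀ w) (Be₀ w') = h₀ w w')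
    (hnorm₀ : h₀ (ξ₀ ^ 4) v₀ = 1)
    -- the subspace W
    (W : Submodule ℚ (AdjoinRoot fq))
    (hW : W = Submodule.span ℚ
      ({v, ξ * v, ξ ^ 2 * v, ξ ^ 3 * v, ξ ^ 4 * v} : Set (AdjoinRoot fq))) :
    (∀ k l : ℕ, k ≤ 4 → l ≤ 4 → h (ξ ^ k * v) (ξ ^ l * v) = h₀ (ξ₀ ^ k * v₀) (ξ₀ ^ l * v₀)) ∧
      (∀ i : AdjoinRoot fq₀ →ₗ[ℚ] AdjoinRoot fq,
        (∀ k : ℕ, k ≤ 4 → i (ξ₀ ^ k * v₀) = ξ ^ k * v) →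
          Function.Injective i ∧
          (∀ w w' : AdjoinRoot fq₀, h (i w) (i w') = h₀ w w') ∧
          LinearMap.range i = W ∧
          ((∀ w : AdjoinRoot fq₀, (∀ w', h₀ w w' = 0) → w = 0) →
            ∀ w ∈ W, (∀ w' ∈ W, h w w' = 0) → w = 0)) := by
  subst hn
  -- ℤ-level facts about f and g
  have hcast : ∀ (p : Polynomial ℤ) (k : ℕ), (p.map (Int.castRingHom ℚ)).coeff k = (p.coeff k : ℚ) :=
    fun p k => coeff_map _ k
  have hf0m : (f₀).Monic := by
    rw [hf₀, show ((X:Polynomial ℤ)^5 - 1) = X^5 - C 1 by simp]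
    exact monic_X_pow_sub_C 1 (by norm_num)
  have hf0d : f₀.natDegree = 5 := by
    rw [hf₀, show ((X:Polynomial ℤ)^5 - 1) = X^5 - C 1 by simp, natDegree_X_pow_sub_C]
  have hg0m : g₀.Monic := by
    rw [hg₀]
    have h1 : ((X:Polynomial ℤ) + 1).Monic := by simpa using monic_X_add_C (1:ℤ)
    have h2 : (((X:Polynomial ℤ)^2 + 1)).Monic := by
      rw [show ((X:Polynomial ℤ)^2 + 1) = X^2 + C 1 by simp]
      exact monic_X_pow_add_C 1 (by norm_num)
    exact h1.mul (h2.pow 2)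
  have hg0d : g₀.natDegree = 5 := by rw [hg₀]; compute_degree!
  have hEPm : (P.comp (X^6)).Monic := by
    rw [← expand_eq_comp_X_pow]; exact hP.expand (by norm_num)
  have hEPd : (P.comp (X^6)).natDegree = 6*m := by
    rw [← expand_eq_comp_X_pow, natDegree_expand, hPd]; ring
  have hEQm : (Q.comp (X^6)).Monic := by
    rw [← expand_eq_comp_X_pow]; exact hQ.expand (by norm_num)
  have hEQd : (Q.comp (X^6)).natDegree = 6*m := by
    rw [← expand_eq_comp_X_pow, natDegree_expand, hQd]; ring
  have hfm : f.Monic := by rw [hf]; exact hf0m.mul hEPm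
  have hfd : f.natDegree = 6*m + 5 := by
    rw [hf, hf0m.natDegree_mul hEPm, hf0d, hEPd]; ring
  have hgm : g.Monic := by rw [hg]; exact hg0m.mul hEQm
  have hgd : g.natDegree = 6*m + 5 := by
    rw [hg, hg0m.natDegree_mul hEQm, hg0d, hEQd]; ring
  have hfcoeff : ∀ r : ℕ, 1 ≤ r → r ≤ 4 → f.coeff (6*m + r) = 0 := by
    intro r h1 h4; rw [hf, hf₀]; exact stmt4_f_coeff m P r h1 h4
  have hgcoeff : ∀ r : ℕ, 1 ≤ r → r ≤ 4 →
      g.coeff (6*m + r) = (if r = 1 ∨ r = 4 then 1 else 2) := by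
    intro r h1 h4; rw [hg, hg₀]; exact stmt4_g_coeff m Q hQ hQd r h1 h4
  have hdcoeff : ∀ r : ℕ, 1 ≤ r → r ≤ 4 →
      (g - f).coeff (6*m + r) = (if r = 1 ∨ r = 4 then 1 else 2) := by
    intro r h1 h4
    rw [coeff_sub, hfcoeff r h1 h4, hgcoeff r h1 h4, sub_zero]
  have hddeg : (g - f).natDegree ≤ 6*m + 4 := by
    rw [natDegree_le_iff_coeff_eq_zero]
    intro N hN
    rw [coeff_sub]
    rcases eq_or_lt_of_le (show 6*m+5 ≤ N by omega) with rfl | hlt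
    · rw [← hfd, hfm.coeff_natDegree, hfd, ← hgd, hgm.coeff_natDegree]; ring
    · rw [coeff_eq_zero_of_natDegree_lt (by omega), coeff_eq_zero_of_natDegree_lt (by omega)]
      ring
  -- ℚ-level facts for the pair (f, g)
  have hGF : g.map (Int.castRingHom ℚ) - fq = (g - f).map (Int.castRingHom ℚ) := by
    rw [hfq, Polynomial.map_sub]
  have hfqm : fq.Monic := by rw [hfq]; exact hfm.map _
  have hfqd : fq.natDegree = 6*m + 5 := by rw [hfq, hfm.natDegree_map]; exact hfd
  have hF1 : fq.coeff (6*m+5-1) = 0 := by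
    rw [hfq, hcast, show 6*m+5-1 = 6*m+4 by omega, hfcoeff 4 (by norm_num) (by norm_num)]
    norm_num
  have hF2 : fq.coeff (6*m+5-2) = 0 := by
    rw [hfq, hcast, show 6*m+5-2 = 6*m+3 by omega, hfcoeff 3 (by norm_num) (by norm_num)]
    norm_num
  have hF3 : fq.coeff (6*m+5-3) = 0 := by
    rw [hfq, hcast, show 6*m+5-3 = 6*m+2 by omega, hfcoeff 2 (by norm_num) (by norm_num)]
    norm_num
  have hDdeg : (g.map (Int.castRingHom ℚ) - fq).natDegree ≤ 6*m+5-1 := by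
    rw [hGF]
    exact le_trans natDegree_map_le (by omega)
  have hD1 : (g.map (Int.castRingHom ℚ) - fq).coeff (6*m+5-1) = 1 := by
    rw [hGF, hcast, show 6*m+5-1 = 6*m+4 by omega, hdcoeff 4 (by norm_num) (by norm_num)]
    norm_num
  have hD2 : (g.map (Int.castRingHom ℚ) - fq).coeff (6*m+5-2) = 2 := by
    rw [hGF, hcast, show 6*m+5-2 = 6*m+3 by omega, hdcoeff 3 (by norm_num) (by norm_num)]
    norm_num
  have hD3 : (g.map (Int.castRingHom ℚ) - fq).coeff (6*m+5-3) = 2 := by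
    rw [hGF, hcast, show 6*m+5-3 = 6*m+2 by omega, hdcoeff 2 (by norm_num) (by norm_num)]
    norm_num
  have hD4 : (g.map (Int.castRingHom ℚ) - fq).coeff (6*m+5-4) = 1 := by
    rw [hGF, hcast, show 6*m+5-4 = 6*m+1 by omega, hdcoeff 1 (by norm_num) (by norm_num)]
    norm_num
  have K := stmt4_key (6*m+5) (by omega) fq (g.map (Int.castRingHom ℚ)) hfqm hfqd
    hF1 hF2 hF3 hDdeg hD1 hD2 hD3 hD4 ξ hξ Be Ce hBe2 hCe v hv h hsymm hAinv
    (fun k hk => by rw [← hBe1 k (by omega)]; exact hBinv _ _)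
    (hBinv _ _) hnorm
  -- ℚ-level facts for the pair (f₀, g₀)
  have hfq0 : fq₀ = (X:Polynomial ℚ)^5 - 1 := by
    rw [hfq₀, hf₀]; simp
  have hgq0 : g₀.map (Int.castRingHom ℚ) = ((X:Polynomial ℚ) + 1) * (X^2+1)^2 := by
    rw [hg₀]; simp
  have hfq0m : fq₀.Monic := by
    rw [hfq0, show ((X:Polynomial ℚ)^5 - 1) = X^5 - C 1 by simp]
    exact monic_X_pow_sub_C 1 (by norm_num)
  have hfq0d : fq₀.natDegree = 5 := by
    rw [hfq0, show ((X:Polynomial ℚ)^5 - 1) = X^5 - C 1 by simp, natDegree_X_pow_sub_C]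
  have hD0 : g₀.map (Int.castRingHom ℚ) - fq₀
      = (X:Polynomial ℚ)^4 + (X^3 + X^3) + (X^2 + X^2) + X + (1+1) := by
    rw [hgq0, hfq0]; ring
  have K₀ := stmt4_key 5 (by norm_num) fq₀ (g₀.map (Int.castRingHom ℚ)) hfq0m hfq0d
    (by rw [hfq0]; simp [coeff_one])
    (by rw [hfq0]; simp [coeff_one])
    (by rw [hfq0]; simp [coeff_one])
    (by rw [hD0]; compute_degree)
    (by rw [hD0]; norm_num [coeff_one, coeff_X])
    (by rw [hD0]; norm_num [coeff_one, coeff_X])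
    (by rw [hD0]; norm_num [coeff_one, coeff_X])
    (by rw [hD0]; norm_num [coeff_one, coeff_X])
    ξ₀ hξ₀ Be₀ Ce₀ hBe₀2 hCe₀ v₀ hv₀ h₀ hsymm₀ hAinv₀
    (fun k hk => by rw [← hBe₀1 k (by omega)]; exact hBinv₀ _ _)
    (hBinv₀ _ _) hnorm₀
  -- Gram reduction
  have strip : ∀ (t a : ℕ), h (ξ^(a+t) * v) (ξ^t * v) = h (ξ^a * v) v := by
    intro t
    induction t with
    | zero => intro a; simp
    | succ t ih =>
      intro a
      rw [show ξ^(a+(t+1)) * v = ξ * (ξ^(a+t) * v) by ring,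
        show ξ^(t+1) * v = ξ * (ξ^t * v) by ring, hAinv]
      exact ih a
  have strip₀ : ∀ (t a : ℕ), h₀ (ξ₀^(a+t) * v₀) (ξ₀^t * v₀) = h₀ (ξ₀^a * v₀) v₀ := by
    intro t
    induction t with
    | zero => intro a; simp
    | succ t ih =>
      intro a
      rw [show ξ₀^(a+(t+1)) * v₀ = ξ₀ * (ξ₀^(a+t) * v₀) by ring,
        show ξ₀^(t+1) * v₀ = ξ₀ * (ξ₀^t * v₀) by ring, hAinv₀]
      exact ih a
  have gramred : ∀ k l : ℕ, h (ξ^k * v) (ξ^l * v) = h (ξ^((k-l)+(l-k)) * v) v := by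
    intro k l
    rcases le_total l k with hlk | hkl
    · obtain ⟨d, rfl⟩ : ∃ d, k = d + l := ⟨k - l, by omega⟩
      rw [strip l d, show (d+l-l)+(l-(d+l)) = d by omega]
    · obtain ⟨d, rfl⟩ : ∃ d, l = d + k := ⟨l - k, by omega⟩
      rw [hsymm, strip k d, show (k-(d+k))+((d+k)-k) = d by omega]
  have gramred₀ : ∀ k l : ℕ, h₀ (ξ₀^k * v₀) (ξ₀^l * v₀) = h₀ (ξ₀^((k-l)+(l-k)) * v₀) v₀ := by
    intro k l
    rcases le_total l k with hlk | hkl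
    · obtain ⟨d, rfl⟩ : ∃ d, k = d + l := ⟨k - l, by omega⟩
      rw [strip₀ l d, show (d+l-l)+(l-(d+l)) = d by omega]
    · obtain ⟨d, rfl⟩ : ∃ d, l = d + k := ⟨l - k, by omega⟩
      rw [hsymm₀, strip₀ k d, show (k-(d+k))+((d+k)-k) = d by omega]
  have hbase : ∀ j : ℕ, j ≤ 4 → h (ξ^j * v) v = h₀ (ξ₀^j * v₀) v₀ := by
    intro j hj
    interval_cases j
    · simpa using K.1.trans K₀.1.symm
    · simpa using K.2.1.trans K₀.2.1.symm
    · exact K.2.2.1.trans K₀.2.2.1.symm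
    · exact K.2.2.2.1.trans K₀.2.2.2.1.symm
    · exact K.2.2.2.2.trans K₀.2.2.2.2.symm
  have part1 : ∀ k l : ℕ, k ≤ 4 → l ≤ 4 →
      h (ξ^k * v) (ξ^l * v) = h₀ (ξ₀^k * v₀) (ξ₀^l * v₀) := by
    intro k l hk hl
    rw [gramred k l, gramred₀ k l]
    exact hbase _ (by omega)
  refine ⟨part1, ?_⟩
  intro i hi
  -- numeric gram values for h₀
  have q : ∀ k l : ℕ, k ≤ 4 → l ≤ 4 → h₀ (ξ₀^k * v₀) (ξ₀^l * v₀)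
      = h₀ (ξ₀^((k-l)+(l-k)) * v₀) v₀ := fun k l _ _ => gramred₀ k l
  have hfin : Module.finrank ℚ (AdjoinRoot fq₀) = 5 := by
    have hne : fq₀ ≠ 0 := hfq0m.ne_zero
    rw [(AdjoinRoot.powerBasis hne).finrank, AdjoinRoot.powerBasis_dim, hfq0d]
  have hset : ({v, ξ * v, ξ ^ 2 * v, ξ ^ 3 * v, ξ ^ 4 * v} : Set (AdjoinRoot fq))
      = {ξ^(0:ℕ)*v, ξ^(1:ℕ)*v, ξ^(2:ℕ)*v, ξ^(3:ℕ)*v, ξ^(4:ℕ)*v} := by norm_num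
  have hrng : Set.range (fun k : Fin 5 => ξ^(k:ℕ) * v)
      = ({ξ^(0:ℕ)*v, ξ^(1:ℕ)*v, ξ^(2:ℕ)*v, ξ^(3:ℕ)*v, ξ^(4:ℕ)*v} : Set (AdjoinRoot fq)) := by
    ext x
    simp only [Set.mem_range, Set.mem_insert_iff, Set.mem_singleton_iff]
    constructor
    · rintro ⟨k, rfl⟩
      fin_cases k
      · exact Or.inl rfl
      · exact Or.inr (Or.inl rfl)
      · exact Or.inr (Or.inr (Or.inl rfl))
      · exact Or.inr (Or.inr (Or.inr (Or.inl rfl)))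
      · exact Or.inr (Or.inr (Or.inr (Or.inr rfl)))
    · rintro (rfl | rfl | rfl | rfl | rfl)
      exacts [⟨0, rfl⟩, ⟨1, rfl⟩, ⟨2, rfl⟩, ⟨3, rfl⟩, ⟨4, rfl⟩]
  have hWr : W = Submodule.span ℚ (Set.range (fun k : Fin 5 => ξ^(k:ℕ) * v)) := by
    rw [hW, hset, hrng]
  have L := stmt4_linalg hfin h h₀ (fun k : Fin 5 => ξ^(k:ℕ) * v)
    (fun k : Fin 5 => ξ₀^(k:ℕ) * v₀)
    (fun k l => part1 k l (Fin.is_le k) (Fin.is_le l))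
    (by show h₀ (ξ₀^(0:ℕ) * v₀) (ξ₀^(0:ℕ) * v₀) = _; rw [q 0 0 (by norm_num) (by norm_num)]; simpa using K₀.1)
    (by show h₀ (ξ₀^(0:ℕ) * v₀) (ξ₀^(1:ℕ) * v₀) = _; rw [q 0 1 (by norm_num) (by norm_num)]; simpa using K₀.2.1)
    (by show h₀ (ξ₀^(0:ℕ) * v₀) (ξ₀^(2:ℕ) * v₀) = _; rw [q 0 2 (by norm_num) (by norm_num)]; simpa using K₀.2.2.1)
    (by show h₀ (ξ₀^(0:ℕ) * v₀) (ξ₀^(3:ℕ) * v₀) = _; rw [q 0 3 (by norm_num) (by norm_num)]; simpa using K₀.2.2.2.1)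
    (by show h₀ (ξ₀^(0:ℕ) * v₀) (ξ₀^(4:ℕ) * v₀) = _; rw [q 0 4 (by norm_num) (by norm_num)]; simpa using K₀.2.2.2.2)
    (by show h₀ (ξ₀^(1:ℕ) * v₀) (ξ₀^(0:ℕ) * v₀) = _; rw [q 1 0 (by norm_num) (by norm_num)]; simpa using K₀.2.1)
    (by show h₀ (ξ₀^(1:ℕ) * v₀) (ξ₀^(1:ℕ) * v₀) = _; rw [q 1 1 (by norm_num) (by norm_num)]; simpa using K₀.1)
    (by show h₀ (ξ₀^(1:ℕ) * v₀) (ξ₀^(2:ℕ) * v₀) = _; rw [q 1 2 (by norm_num) (by norm_num)]; simpa using K₀.2.1)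
    (by show h₀ (ξ₀^(1:ℕ) * v₀) (ξ₀^(3:ℕ) * v₀) = _; rw [q 1 3 (by norm_num) (by norm_num)]; simpa using K₀.2.2.1)
    (by show h₀ (ξ₀^(1:ℕ) * v₀) (ξ₀^(4:ℕ) * v₀) = _; rw [q 1 4 (by norm_num) (by norm_num)]; simpa using K₀.2.2.2.1)
    (by show h₀ (ξ₀^(2:ℕ) * v₀) (ξ₀^(0:ℕ) * v₀) = _; rw [q 2 0 (by norm_num) (by norm_num)]; simpa using K₀.2.2.1)
    (by show h₀ (ξ₀^(2:ℕ) * v₀) (ξ₀^(1:ℕ) * v₀) = _; rw [q 2 1 (by norm_num) (by norm_num)]; simpa using K₀.2.1)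
    (by show h₀ (ξ₀^(2:ℕ) * v₀) (ξ₀^(2:ℕ) * v₀) = _; rw [q 2 2 (by norm_num) (by norm_num)]; simpa using K₀.1)
    (by show h₀ (ξ₀^(2:ℕ) * v₀) (ξ₀^(3:ℕ) * v₀) = _; rw [q 2 3 (by norm_num) (by norm_num)]; simpa using K₀.2.1)
    (by show h₀ (ξ₀^(2:ℕ) * v₀) (ξ₀^(4:ℕ) * v₀) = _; rw [q 2 4 (by norm_num) (by norm_num)]; simpa using K₀.2.2.1)
    (by show h₀ (ξ₀^(3:ℕ) * v₀) (ξ₀^(0:ℕ) * v₀) = _; rw [q 3 0 (by norm_num) (by norm_num)]; simpa using K₀.2.2.2.1)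
    (by show h₀ (ξ₀^(3:ℕ) * v₀) (ξ₀^(1:ℕ) * v₀) = _; rw [q 3 1 (by norm_num) (by norm_num)]; simpa using K₀.2.2.1)
    (by show h₀ (ξ₀^(3:ℕ) * v₀) (ξ₀^(2:ℕ) * v₀) = _; rw [q 3 2 (by norm_num) (by norm_num)]; simpa using K₀.2.1)
    (by show h₀ (ξ₀^(3:ℕ) * v₀) (ξ₀^(3:ℕ) * v₀) = _; rw [q 3 3 (by norm_num) (by norm_num)]; simpa using K₀.1)
    (by show h₀ (ξ₀^(3:ℕ) * v₀) (ξ₀^(4:ℕ) * v₀) = _; rw [q 3 4 (by norm_num) (by norm_num)]; simpa using K₀.2.1)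
    (by show h₀ (ξ₀^(4:ℕ) * v₀) (ξ₀^(0:ℕ) * v₀) = _; rw [q 4 0 (by norm_num) (by norm_num)]; simpa using K₀.2.2.2.2)
    (by show h₀ (ξ₀^(4:ℕ) * v₀) (ξ₀^(1:ℕ) * v₀) = _; rw [q 4 1 (by norm_num) (by norm_num)]; simpa using K₀.2.2.2.1)
    (by show h₀ (ξ₀^(4:ℕ) * v₀) (ξ₀^(2:ℕ) * v₀) = _; rw [q 4 2 (by norm_num) (by norm_num)]; simpa using K₀.2.2.1)
    (by show h₀ (ξ₀^(4:ℕ) * v₀) (ξ₀^(3:ℕ) * v₀) = _; rw [q 4 3 (by norm_num) (by norm_num)]; simpa using K₀.2.1)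
    (by show h₀ (ξ₀^(4:ℕ) * v₀) (ξ₀^(4:ℕ) * v₀) = _; rw [q 4 4 (by norm_num) (by norm_num)]; simpa using K₀.1)
    i (fun k => hi (k:ℕ) (Fin.is_le k)) W hWr
  exact L
end
end

section
/- With f₀ = X⁵ − 1 and g₀ = (X+1)(X²+1)², the vectors ε = v − A²v and ε′ = A³v + A⁴v − Av satisfy h(ε,ε) = 0, h(ε′,ε′) = 0 and h(ε,ε′) = 0, and they are linearly independent; hence they span a two-dimensional totally isotropic subspace of (V, h), so the Witt index of h over ℚ is at least 2. -/
/-!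
Multiplication by `ξ` and `B` both preserve `h`, hence so does `C = A⁻¹B`. Since `C` fixes
`1, ξ, ξ², ξ³` and sends `ξ⁴` to `ξ⁴ + v`, invariance under `C` forces `h(v, ξᵏ) = 0` for
`k ≤ 3`. As `ξ⁵ = 1`, the adjoint of multiplication by `ξⁱ` is multiplication by `ξ⁵⁻ⁱ`, so
every pairing of `ε = (1 - ξ²)v` and `ε' = (ξ³ + ξ⁴ - ξ)v` becomes `h(v, w)` with `w` an explicit
polynomial in `ξ`; in all four cases `w` has degree at most `3`, hence pairs trivially with `v`.
Independence holds because `ε = ξ³ - ξ²` and `ε' = -(2 + 2ξ + ξ² + ξ³ + 2ξ⁴)` in the power basis.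
-/

open Polynomial

noncomputable section

/-- `f₀ = X⁵ - 1`. -/
def fPoly : Polynomial ℤ := X ^ 5 - 1

/-- `g₀ = (X+1)(X²+1)²`. -/
def gPoly : Polynomial ℤ := (X + 1) * (X ^ 2 + 1) ^ 2

/-- `f₀` viewed over `ℚ`. -/
def fQ : Polynomial ℚ := fPoly.map (Int.castRingHom ℚ)

/-- `V = ℚ[X]/(f₀)`. -/
abbrev V : Type := AdjoinRoot fQ

/-- the image of `X` in `V`; multiplication by `ξ` is the companion operator `A`. -/
def ξ : V := AdjoinRoot.root fQ

/-- A subspace is totally isotropic for a bilinear form. -/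
def IsTotallyIsotropic {K W : Type*} [Field K] [AddCommGroup W] [Module K W]
    (h : W →ₗ[K] W →ₗ[K] K) (U : Submodule K W) : Prop :=
  ∀ w ∈ U, ∀ w' ∈ U, h w w' = 0

section InvariantForm

variable {K R M : Type*} [CommSemiring K] [Semiring R] [Module K R] [AddCommMonoid M]
  [Module K M] (h : R →ₗ[K] R →ₗ[K] M) {u : R}

lemma apply_pow_mul_pow_mul (hu : ∀ x y, h (u * x) (u * y) = h x y) (n : ℕ) (x y : R) :
    h (u ^ n * x) (u ^ n * y) = h x y := by
  induction n generalizing x y with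
  | zero => simp
  | succ n ih => rw [pow_succ, mul_assoc, mul_assoc, ih, hu]

lemma apply_pow_mul_left (hu : ∀ x y, h (u * x) (u * y) = h x y) {n i j : ℕ} (hn : u ^ n = 1)
    (hij : i + j = n) (x y : R) : h (u ^ i * x) y = h x (u ^ j * y) :=
  calc h (u ^ i * x) y = h (u ^ i * x) (u ^ i * (u ^ j * y)) := by
        rw [← mul_assoc, ← pow_add, hij, hn, one_mul]
    _ = h x (u ^ j * y) := apply_pow_mul_pow_mul h hu i x _

end InvariantForm

lemma LinearMap.map_aeval_eq_zero_of_natDegree_lt {K A M : Type*} [CommSemiring K] [Semiring A]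
    [Algebra K A] [AddCommMonoid M] [Module K M] (φ : A →ₗ[K] M) (a : A) {n : ℕ}
    (hφ : ∀ k < n, φ (a ^ k) = 0) {p : K[X]} (hp : p.natDegree < n) : φ (aeval a p) = 0 := by
  rw [aeval_eq_sum_range' hp, map_sum]
  exact Finset.sum_eq_zero fun k hk => by rw [map_smul, hφ k (Finset.mem_range.mp hk), smul_zero]

lemma AdjoinRoot.eq_zero_of_aeval_root_eq_zero {R : Type*} [CommRing R] {f p : R[X]}
    (hf : f.Monic) (hp : p.natDegree < f.natDegree) (hp0 : aeval (root f) p = 0) : p = 0 :=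
  by_contra fun hne => mk_ne_zero_of_natDegree_lt hf hne hp (aeval_eq p ▸ hp0)

lemma isTotallyIsotropic_span {K W : Type*} [Field K] [AddCommGroup W] [Module K W]
    (h : W →ₗ[K] W →ₗ[K] K) {s : Set W} (hs : ∀ x ∈ s, ∀ y ∈ s, h x y = 0) :
    IsTotallyIsotropic h (Submodule.span K s) := by
  intro w hw w' hw'
  have hs' : ∀ x ∈ s, h x w' = 0 := fun x hx =>
    LinearMap.eqOn_span' (f := h x) (g := 0) (fun y hy => hs x hx y hy) hw'
  exact LinearMap.eqOn_span' (f := h.flip w') (g := 0) hs' hw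

lemma fQ_eq : fQ = X ^ 5 - 1 := by
  simp [fQ, fPoly]

lemma ξ_pow_five : ξ ^ 5 = 1 := by
  have : AdjoinRoot.mk fQ (X ^ 5 - 1) = 0 := fQ_eq ▸ AdjoinRoot.mk_self
  simpa [sub_eq_zero, ξ] using this

lemma isUnit_ξ : IsUnit ξ :=
  IsUnit.of_mul_eq_one (ξ ^ 4) (by linear_combination ξ_pow_five)

lemma mk_X_pow_five_sub_gPoly :
    AdjoinRoot.mk fQ (X ^ 5 - gPoly.map (Int.castRingHom ℚ)) =
      ξ ^ 5 - (ξ + 1) * (ξ ^ 2 + 1) ^ 2 := by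
  simp [gPoly, ξ]

lemma linearIndependent_isotropic_pair :
    LinearIndependent ℚ ![ξ ^ 3 - ξ ^ 2, -(2 + 2 * ξ + ξ ^ 2 + ξ ^ 3 + 2 * ξ ^ 4)] := by
  rw [LinearIndependent.pair_iff]
  intro s t hst
  set p : ℚ[X] := C s * (X ^ 3 - X ^ 2) - C t * (2 + 2 * X + X ^ 2 + X ^ 3 + 2 * X ^ 4) with hp
  have hp0 : p = 0 := by
    refine AdjoinRoot.eq_zero_of_aeval_root_eq_zero (fQ_eq ▸ monic_X_pow_sub_C 1 (by norm_num))
      ?_ ?_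
    · rw [fQ_eq, show (X ^ 5 - 1 : ℚ[X]).natDegree = 5 by compute_degree!]
      exact Nat.lt_succ_of_le (by rw [hp]; compute_degree)
    · rw [← ξ, ← hst, hp]
      simp only [map_sub, map_add, map_mul, map_pow, map_ofNat, aeval_C, aeval_X,
        Algebra.smul_def]
      ring
  have h0 := congrArg (coeff · 0) hp0
  have h2 := congrArg (coeff · 2) hp0
  simp [hp, coeff_X, coeff_X_pow] at h0 h2
  exact ⟨by linarith, h0⟩

section Companion

variable {Be Ce : V →ₗ[ℚ] V}

lemma Ce_pow_eq_self (hBe1 : ∀ k : ℕ, k ≤ 3 → Be (ξ ^ k) = ξ ^ (k + 1))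
    (hCe : ∀ w : V, ξ * Ce w = Be w) {k : ℕ} (hk : k ≤ 3) : Ce (ξ ^ k) = ξ ^ k :=
  isUnit_ξ.mul_left_cancel (by rw [hCe, hBe1 k hk, pow_succ'])

lemma Ce_pow_four_sub_pow_four
    (hBe2 : Be (ξ ^ 4) = AdjoinRoot.mk fQ (X ^ 5 - gPoly.map (Int.castRingHom ℚ)))
    (hCe : ∀ w : V, ξ * Ce w = Be w) :
    Ce (ξ ^ 4) - ξ ^ 4 = -(1 + 2 * ξ + 2 * ξ ^ 2 + ξ ^ 3 + 2 * ξ ^ 4) := by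
  have hξv : ξ * (Ce (ξ ^ 4) - ξ ^ 4) = -((ξ + 1) * (ξ ^ 2 + 1) ^ 2) := by
    rw [mul_sub, hCe, hBe2, mk_X_pow_five_sub_gPoly]
    ring
  linear_combination ξ ^ 4 * hξv -
    (Ce (ξ ^ 4) - ξ ^ 4 + ξ ^ 4 + ξ ^ 3 + 2 * ξ ^ 2 + 2 * ξ + 1) * ξ_pow_five

variable {h : V →ₗ[ℚ] V →ₗ[ℚ] ℚ}

lemma apply_Ce_Ce (hCe : ∀ w : V, ξ * Ce w = Be w)
    (hAinv : ∀ w w' : V, h (ξ * w) (ξ * w') = h w w')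
    (hBinv : ∀ w w' : V, h (Be w) (Be w') = h w w') (w w' : V) :
    h (Ce w) (Ce w') = h w w' := by
  rw [← hAinv, hCe, hCe, hBinv]

lemma apply_Ce_pow_four_sub_pow_four_pow (hBe1 : ∀ k : ℕ, k ≤ 3 → Be (ξ ^ k) = ξ ^ (k + 1))
    (hCe : ∀ w : V, ξ * Ce w = Be w) (hAinv : ∀ w w' : V, h (ξ * w) (ξ * w') = h w w')
    (hBinv : ∀ w w' : V, h (Be w) (Be w') = h w w') {k : ℕ} (hk : k < 4) :
    h (Ce (ξ ^ 4) - ξ ^ 4) (ξ ^ k) = 0 := by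
  have := apply_Ce_Ce hCe hAinv hBinv (ξ ^ 4) (ξ ^ k)
  rw [Ce_pow_eq_self hBe1 hCe (Nat.le_of_lt_succ hk)] at this
  rw [map_sub, LinearMap.sub_apply, this, sub_self]

end Companion

section IsotropicPair

variable {h : V →ₗ[ℚ] V →ₗ[ℚ] ℚ} {v : V}

lemma apply_sub_pow_two_mul_left (hAinv : ∀ w w' : V, h (ξ * w) (ξ * w') = h w w') (w : V) :
    h (v - ξ ^ 2 * v) w = h v ((1 - ξ ^ 3) * w) := by
  rw [map_sub, LinearMap.sub_apply,
    apply_pow_mul_left h hAinv ξ_pow_five (show 2 + 3 = 5 from rfl), sub_mul, one_mul, map_sub]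

lemma apply_pow_three_mul_add_pow_four_mul_sub_mul_left
    (hAinv : ∀ w w' : V, h (ξ * w) (ξ * w') = h w w') (w : V) :
    h (ξ ^ 3 * v + ξ ^ 4 * v - ξ * v) w = h v ((ξ ^ 2 + ξ - ξ ^ 4) * w) := by
  have hξ := apply_pow_mul_left h hAinv ξ_pow_five (show 1 + 4 = 5 from rfl) v w
  rw [pow_one] at hξ
  rw [map_sub, map_add, LinearMap.sub_apply, LinearMap.add_apply, hξ,
    apply_pow_mul_left h hAinv ξ_pow_five (show 3 + 2 = 5 from rfl),
    apply_pow_mul_left h hAinv ξ_pow_five (show 4 + 1 = 5 from rfl), ← map_add, ← map_sub]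
  congr 1
  ring

lemma isotropic_pairings (hAinv : ∀ w w' : V, h (ξ * w) (ξ * w') = h w w')
    (hv : ∀ k < 4, h v (ξ ^ k) = 0) {ε ε' : V}
    (hε : ε = v - ξ ^ 2 * v) (hε' : ε' = ξ ^ 3 * v + ξ ^ 4 * v - ξ * v)
    (hε₀ : ε = ξ ^ 3 - ξ ^ 2) (hε'₀ : ε' = -(2 + 2 * ξ + ξ ^ 2 + ξ ^ 3 + 2 * ξ ^ 4)) :
    h ε ε = 0 ∧ h ε ε' = 0 ∧ h ε' ε = 0 ∧ h ε' ε' = 0 := by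
  have hv_aeval (p : ℚ[X]) (hp : p.natDegree ≤ 3) {w : V} (hw : aeval ξ p = w) : h v w = 0 :=
    hw ▸ (h v).map_aeval_eq_zero_of_natDegree_lt ξ hv (Nat.lt_succ_of_le hp)
  have hεw (w : V) : h ε w = h v ((1 - ξ ^ 3) * w) := hε ▸ apply_sub_pow_two_mul_left hAinv w
  have hε'w (w : V) : h ε' w = h v ((ξ ^ 2 + ξ - ξ ^ 4) * w) :=
    hε' ▸ apply_pow_three_mul_add_pow_four_mul_sub_mul_left hAinv w
  refine ⟨?_, ?_, ?_, ?_⟩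
  · rw [hεw]
    refine hv_aeval ((1 - X) ^ 2 * (1 + X)) (by compute_degree!) ?_
    simp only [map_mul, map_pow, map_sub, map_add, map_one, aeval_X, hε₀]
    linear_combination (ξ - 1) * ξ_pow_five
  · rw [hεw]
    refine hv_aeval ((X - 1) * (X + 1) ^ 2) (by compute_degree!) ?_
    simp only [map_mul, map_pow, map_sub, map_add, map_one, aeval_X, hε'₀]
    linear_combination -(1 + ξ + 2 * ξ ^ 2) * ξ_pow_five
  · rw [hε'w]
    refine hv_aeval ((1 - X) * (1 + X) ^ 2) (by compute_degree!) ?_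
    simp only [map_mul, map_pow, map_sub, map_add, map_one, aeval_X, hε₀]
    linear_combination -(1 + ξ - ξ ^ 2) * ξ_pow_five
  · rw [hε'w]
    refine hv_aeval (-(1 + X) ^ 3) (by compute_degree!) ?_
    simp only [map_neg, map_pow, map_add, map_one, aeval_X, hε'₀]
    linear_combination (1 + ξ - ξ ^ 2 - 2 * ξ ^ 3) * ξ_pow_five

end IsotropicPair

theorem stmt_10_general
    (Be Ce : V →ₗ[ℚ] V)
    (hBe1 : ∀ k : ℕ, k ≤ 3 → Be (ξ ^ k) = ξ ^ (k + 1))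
    (hBe2 : Be (ξ ^ 4) = AdjoinRoot.mk fQ (X ^ 5 - gPoly.map (Int.castRingHom ℚ)))
    (hCe : ∀ w : V, ξ * Ce w = Be w)
    (v : V) (hv : v = Ce (ξ ^ 4) - ξ ^ 4)
    (h : V →ₗ[ℚ] V →ₗ[ℚ] ℚ)
    (hAinv : ∀ w w' : V, h (ξ * w) (ξ * w') = h w w')
    (hBinv : ∀ w w' : V, h (Be w) (Be w') = h w w')
    (ε ε' : V)
    (hε : ε = v - ξ ^ 2 * v)
    (hε' : ε' = ξ ^ 3 * v + ξ ^ 4 * v - ξ * v) :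
    h ε ε = 0 ∧ h ε' ε' = 0 ∧ h ε ε' = 0 ∧
      LinearIndependent ℚ ![ε, ε'] ∧
      IsTotallyIsotropic h (Submodule.span ℚ ({ε, ε'} : Set V)) ∧
      Module.finrank ℚ (Submodule.span ℚ ({ε, ε'} : Set V)) = 2 ∧
      ∃ U : Submodule ℚ V, IsTotallyIsotropic h U ∧ 2 ≤ Module.finrank ℚ U := by
  have hv₀ : v = -(1 + 2 * ξ + 2 * ξ ^ 2 + ξ ^ 3 + 2 * ξ ^ 4) :=
    hv.trans (Ce_pow_four_sub_pow_four hBe2 hCe)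
  have hε₀ : ε = ξ ^ 3 - ξ ^ 2 := by
    rw [hε, hv₀]
    linear_combination (1 + 2 * ξ) * ξ_pow_five
  have hε'₀ : ε' = -(2 + 2 * ξ + ξ ^ 2 + ξ ^ 3 + 2 * ξ ^ 4) := by
    rw [hε', hv₀]
    linear_combination -(2 + 3 * ξ + 3 * ξ ^ 2 + 2 * ξ ^ 3) * ξ_pow_five
  have hvξ : ∀ k < 4, h v (ξ ^ k) = 0 := fun _ hk =>
    hv ▸ apply_Ce_pow_four_sub_pow_four_pow hBe1 hCe hAinv hBinv hk
  obtain ⟨hεε, hεε', hε'ε, hε'ε'⟩ := isotropic_pairings hAinv hvξ hε hε' hε₀ hε'₀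
  have hLI : LinearIndependent ℚ ![ε, ε'] := hε₀ ▸ hε'₀ ▸ linearIndependent_isotropic_pair
  have hiso : IsTotallyIsotropic h (Submodule.span ℚ ({ε, ε'} : Set V)) :=
    isTotallyIsotropic_span h (by rintro _ (rfl | rfl) _ (rfl | rfl) <;> assumption)
  have hrank : Module.finrank ℚ (Submodule.span ℚ ({ε, ε'} : Set V)) = 2 := by
    rw [← Matrix.range_cons_cons_empty ε ε' ![], finrank_span_eq_card hLI, Fintype.card_fin]
  exact ⟨hεε, hε'ε', hεε', hLI, hiso, hrank, _, hiso, hrank.ge⟩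

/-- For `f₀ = X⁵−1`, `g₀ = (X+1)(X²+1)²`, the vectors
`ε = v − A²v` and `ε′ = A³v + A⁴v − Av` are isotropic, mutually orthogonal and
linearly independent; they span a two-dimensional totally isotropic subspace, so
the Witt index of `h` over `ℚ` is at least `2`. -/
theorem stmt_10
    (Be Ce : V →ₗ[ℚ] V)
    (hBe1 : ∀ k : ℕ, k ≤ 3 → Be (ξ ^ k) = ξ ^ (k + 1))
    (hBe2 : Be (ξ ^ 4) = AdjoinRoot.mk fQ (X ^ 5 - gPoly.map (Int.castRingHom ℚ)))
    (hCe : ∀ w : V, ξ * Ce w = Be w)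
    (v : V) (hv : v = Ce (ξ ^ 4) - ξ ^ 4)
    (h : V →ₗ[ℚ] V →ₗ[ℚ] ℚ)
    (hsymm : ∀ w w' : V, h w w' = h w' w)
    (hAinv : ∀ w w' : V, h (ξ * w) (ξ * w') = h w w')
    (hBinv : ∀ w w' : V, h (Be w) (Be w') = h w w')
    (hnorm : h (ξ ^ 4) v = 1)
    (ε ε' : V)
    (hε : ε = v - ξ ^ 2 * v)
    (hε' : ε' = ξ ^ 3 * v + ξ ^ 4 * v - ξ * v) :
    h ε ε = 0 ∧ h ε' ε' = 0 ∧ h ε ε' = 0 ∧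
      LinearIndependent ℚ ![ε, ε'] ∧
      IsTotallyIsotropic h (Submodule.span ℚ ({ε, ε'} : Set V)) ∧
      Module.finrank ℚ (Submodule.span ℚ ({ε, ε'} : Set V)) = 2 ∧
      ∃ U : Submodule ℚ V, IsTotallyIsotropic h U ∧ 2 ≤ Module.finrank ℚ U :=
  stmt_10_general Be Ce hBe1 hBe2 hCe v hv h hAinv hBinv ε ε' hε hε'
end
end

section
/- The ternary quadratic form Q(x,y,z) = x² + y² + z² + 3xy − 3xz + 3yz is anisotropic over ℚ: if x, y, z ∈ ℚ satisfy Q(x,y,z) = 0, then x = y = z = 0. -/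
lemma zmod5_key : ∀ B C : ZMod 5, B ^ 2 = 3 * C ^ 2 → B = 0 ∧ C = 0 := by decide

lemma int_key : ∀ n : ℕ, ∀ b a c : ℤ, b.natAbs = n →
    a ^ 2 = 5 * b ^ 2 - 40 * c ^ 2 → a = 0 ∧ b = 0 ∧ c = 0 := by
  intro n
  induction n using Nat.strong_induction_on with
  | _ n ih =>
    intro b a c hb heq
    -- 5 ∣ a
    have h5a : (5 : ℤ) ∣ a := by
      have : (5 : ℤ) ∣ a ^ 2 := ⟨b ^ 2 - 8 * c ^ 2, by linarith⟩
      exact Int.Prime.dvd_pow' (by norm_num) this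
    obtain ⟨a₁, rfl⟩ := h5a
    have heq1 : 5 * a₁ ^ 2 = b ^ 2 - 8 * c ^ 2 := by nlinarith
    -- 5 ∣ b and 5 ∣ c via ZMod 5
    have hz : ((b : ZMod 5)) ^ 2 = 3 * ((c : ZMod 5)) ^ 2 := by
      have hd : (5 : ℤ) ∣ b ^ 2 - 3 * c ^ 2 := ⟨a₁ ^ 2 + c ^ 2, by linarith⟩
      have := (ZMod.intCast_zmod_eq_zero_iff_dvd (b ^ 2 - 3 * c ^ 2) 5).mpr hd
      push_cast at this
      linear_combination this
    obtain ⟨hbz, hcz⟩ := zmod5_key _ _ hz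
    have h5b : (5 : ℤ) ∣ b := by
      rwa [ZMod.intCast_zmod_eq_zero_iff_dvd] at hbz
    have h5c : (5 : ℤ) ∣ c := by
      rwa [ZMod.intCast_zmod_eq_zero_iff_dvd] at hcz
    obtain ⟨b₁, rfl⟩ := h5b
    obtain ⟨c₁, rfl⟩ := h5c
    have heq2 : a₁ ^ 2 = 5 * b₁ ^ 2 - 40 * c₁ ^ 2 := by nlinarith
    rcases eq_or_ne b₁ 0 with hb0 | hb0
    · subst hb0
      have ha₁ : a₁ = 0 ∧ c₁ = 0 := by
        constructor <;> nlinarith [sq_nonneg a₁, sq_nonneg c₁]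
      simp [ha₁.1, ha₁.2]
    · have hlt : b₁.natAbs < n := by
        rw [← hb]
        have : (5 * b₁).natAbs = 5 * b₁.natAbs := by
          rw [Int.natAbs_mul]; norm_num
        rw [this]
        have : b₁.natAbs ≠ 0 := Int.natAbs_ne_zero.mpr hb0
        omega
      obtain ⟨h1, h2, h3⟩ := ih b₁.natAbs hlt b₁ a₁ c₁ rfl heq2
      subst h1; subst h2; subst h3
      simp

lemma rat_key (a b c : ℚ) (h : a ^ 2 = 5 * b ^ 2 - 40 * c ^ 2) :
    a = 0 ∧ b = 0 ∧ c = 0 := by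
  set A : ℤ := a.num * b.den * c.den with hA
  set B : ℤ := b.num * a.den * c.den with hB
  set C : ℤ := c.num * a.den * b.den with hC
  have had : (a.den : ℚ) ≠ 0 := by exact_mod_cast a.den_nz
  have hbd : (b.den : ℚ) ≠ 0 := by exact_mod_cast b.den_nz
  have hcd : (c.den : ℚ) ≠ 0 := by exact_mod_cast c.den_nz
  have ha : (a.num : ℚ) = a * a.den := by
    exact (div_eq_iff (by exact_mod_cast a.den_nz)).mp (Rat.num_div_den a)
  have hb : (b.num : ℚ) = b * b.den := by
    exact (div_eq_iff (by exact_mod_cast b.den_nz)).mp (Rat.num_div_den b)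
  have hc : (c.num : ℚ) = c * c.den := by
    exact (div_eq_iff (by exact_mod_cast c.den_nz)).mp (Rat.num_div_den c)
  have hint : (A : ℚ) ^ 2 = 5 * (B : ℚ) ^ 2 - 40 * (C : ℚ) ^ 2 := by
    push_cast [hA, hB, hC, ha, hb, hc]
    ring_nf
    nlinarith [h, sq_nonneg ((a.den : ℚ) * b.den * c.den)]
  have hintZ : A ^ 2 = 5 * B ^ 2 - 40 * C ^ 2 := by exact_mod_cast hint
  obtain ⟨h1, h2, h3⟩ := int_key B.natAbs B A C rfl hintZ
  have hbdz : (b.den : ℤ) ≠ 0 := by exact_mod_cast b.den_nz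
  have hcdz : (c.den : ℤ) ≠ 0 := by exact_mod_cast c.den_nz
  have hadz : (a.den : ℤ) ≠ 0 := by exact_mod_cast a.den_nz
  rw [hB, mul_eq_zero, mul_eq_zero] at h2
  rw [hA, mul_eq_zero, mul_eq_zero] at h1
  rw [hC, mul_eq_zero, mul_eq_zero] at h3
  refine ⟨Rat.num_eq_zero.mp ?_, Rat.num_eq_zero.mp ?_, Rat.num_eq_zero.mp ?_⟩
  · tauto
  · tauto
  · tauto

/-- The ternary quadratic form
`Q(x,y,z) = x² + y² + z² + 3xy − 3xz + 3yz` is anisotropic over `ℚ`: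
its only rational zero is the trivial one. -/
theorem stmt_15 (x y z : ℚ)
    (h : x ^ 2 + y ^ 2 + z ^ 2 + 3 * x * y - 3 * x * z + 3 * y * z = 0) :
    x = 0 ∧ y = 0 ∧ z = 0 := by
  have key : (2 * x + 3 * y - 3 * z) ^ 2 = 5 * (y - 3 * z) ^ 2 - 40 * z ^ 2 := by
    nlinarith [h]
  obtain ⟨h1, h2, h3⟩ := rat_key _ _ _ key
  refine ⟨?_, ?_, ?_⟩ <;> linarith
end
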